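/- For complex numbers a_1, …, a_p, let s_k denote the k-th elementary symmetric function of a_1, …, a_p (with s_0 = 1). Then Π_{j=1}^{p} (1 + |a_j|^2) ≤ Σ_{k=0}^{p} k!·(p−k)!·|s_k|^2. -/

import Mathlib

/-!
Read `f : ℕ → ℂ` as the binary form `Q = ∑ₖ f k zᵏ w^(m-k)` of degree `m`, with the Fischer norm
`‖Q‖² = ∑ₖ k! (m-k)! |f k|²`, for which `∂_z, ∂_w` are adjoint to multiplication by `z, w`.
For the linear form `L = w + b z` the commutator `[∂_w + b̄ ∂_z, L] = 1 + |b|²` gives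
`‖L Q‖² = (1 + |b|²) ‖Q‖² + ‖(∂_w + b̄ ∂_z) Q‖² ≥ (1 + |b|²) ‖Q‖²`.
As `∏ⱼ (w + aⱼ z) = ∑ₖ sₖ zᵏ w^(p-k)`, induction on `p` gives the inequality.
-/

open Finset Complex ComplexConjugate
open scoped Nat

namespace Multiset

variable {R : Type*} [CommSemiring R]

theorem esymm_zero (s : Multiset R) : s.esymm 0 = 1 := by
  simp [esymm]

theorem esymm_cons_succ (b : R) (s : Multiset R) (k : ℕ) :
    (b ::ₘ s).esymm (k + 1) = s.esymm (k + 1) + b * s.esymm k := by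
  simp [esymm, map_map, sum_map_mul_left]

theorem esymm_eq_zero_of_card_lt {s : Multiset R} {k : ℕ} (h : card s < k) : s.esymm k = 0 := by
  simp [esymm, powersetCard_eq_empty k h]

end Multiset

noncomputable def fischerNormSq (m : ℕ) (f : ℕ → ℂ) : ℝ :=
  ∑ k ∈ range (m + 1), (k ! * (m - k)! : ℝ) * normSq (f k)

theorem fischerNormSq_succ_eq {m : ℕ} {b : ℂ} {f g : ℕ → ℂ} (hf : f (m + 1) = 0)
    (hg₀ : g 0 = f 0) (hg : ∀ k, g (k + 1) = f (k + 1) + b * f k) :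
    fischerNormSq (m + 1) g = (1 + normSq b) * fischerNormSq m f
      + ∑ k ∈ range m, (k ! * (m - 1 - k)! : ℝ) *
          normSq ((m - k : ℕ) * f k + (k + 1 : ℕ) * conj b * f (k + 1)) := by
  set w : ℕ → ℝ := fun k => k ! * (m - k)! * normSq (f k) with hw
  set u : ℕ → ℝ := fun k => k ! * (m + 1 - k)! * normSq (f k) with hu
  set v : ℕ → ℝ := fun k => (k + 1)! * (m - k)! * normSq (f k) with hv
  -- each summand is its defect term plus differences that telescope over `range m`
  have hterm : ∀ k ∈ range m, ((k + 1)! * (m - k)! : ℝ) * normSq (f (k + 1) + b * f k)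
      = (k ! * (m - 1 - k)! : ℝ) * normSq ((m - k : ℕ) * f k + (k + 1 : ℕ) * conj b * f (k + 1))
        + (u (k + 1) - u k) + w k + normSq b * (v k - v (k + 1)) + normSq b * w (k + 1) := by
    intro k hk
    obtain ⟨j, rfl⟩ : ∃ j, m = k + 1 + j := ⟨m - k - 1, by have := mem_range.mp hk; omega⟩
    simp only [hw, hu, hv, show k + 1 + j - k = j + 1 by omega,
      show k + 1 + j - 1 - k = j by omega, show k + 1 + j + 1 - k = j + 2 by omega,
      show k + 1 + j - (k + 1) = j by omega, show k + 1 + j + 1 - (k + 1) = j + 1 by omega,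
      Nat.factorial_succ, normSq_apply, add_re, add_im, mul_re, mul_im, natCast_re, natCast_im,
      conj_re, conj_im]
    push_cast
    ring
  have hsum := sum_congr rfl hterm
  rw [sum_add_distrib, sum_add_distrib, sum_add_distrib, sum_add_distrib, sum_range_sub,
    ← mul_sum, ← mul_sum, sum_range_sub'] at hsum
  have hN₁ : fischerNormSq m f = ∑ k ∈ range m, w k + w m := sum_range_succ _ _
  have hN₂ : fischerNormSq m f = ∑ k ∈ range m, w (k + 1) + w 0 := sum_range_succ' _ _
  have hG : fischerNormSq (m + 1) g = ((m + 1)! : ℝ) * normSq (f 0)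
      + ∑ k ∈ range m, ((k + 1)! * (m - k)! : ℝ) * normSq (f (k + 1) + b * f k)
      + ((m + 1)! : ℝ) * normSq b * normSq (f m) := by
    rw [fischerNormSq, sum_range_succ', sum_range_succ]
    simp only [hg₀, hg, hf, Nat.reduceSubDiff, tsub_self, tsub_zero, Nat.factorial_zero,
      Nat.cast_one, normSq_mul, mul_one, one_mul, zero_add]
    ring
  simp only [hw, hu, hv, Nat.sub_self, Nat.add_sub_cancel_left, Nat.factorial_zero,
    Nat.factorial_one, Nat.cast_one, mul_one] at hsum hN₁
  linear_combination hG + hsum - hN₁ - normSq b * hN₂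

theorem fischerNormSq_le_succ {m : ℕ} {b : ℂ} {f g : ℕ → ℂ} (hf : f (m + 1) = 0)
    (hg₀ : g 0 = f 0) (hg : ∀ k, g (k + 1) = f (k + 1) + b * f k) :
    (1 + normSq b) * fischerNormSq m f ≤ fischerNormSq (m + 1) g := by
  rw [fischerNormSq_succ_eq hf hg₀ hg]
  exact le_add_of_nonneg_right <|
    sum_nonneg fun k _ => mul_nonneg (by positivity) (normSq_nonneg _)

theorem prod_one_add_normSq_le_fischerNormSq_esymm (s : Multiset ℂ) :
    (s.map fun x => 1 + normSq x).prod ≤ fischerNormSq (Multiset.card s) s.esymm := by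
  induction s using Multiset.induction_on with
  | empty => simp [fischerNormSq, Multiset.esymm_zero]
  | cons b s ih =>
    rw [Multiset.map_cons, Multiset.prod_cons, Multiset.card_cons]
    calc (1 + normSq b) * (s.map fun x => 1 + normSq x).prod
        ≤ (1 + normSq b) * fischerNormSq (Multiset.card s) s.esymm :=
          mul_le_mul_of_nonneg_left ih (add_nonneg zero_le_one (normSq_nonneg b))
      _ ≤ fischerNormSq (Multiset.card s + 1) (b ::ₘ s).esymm :=
        fischerNormSq_le_succ (Multiset.esymm_eq_zero_of_card_lt (Nat.lt_add_one _))
          ((b ::ₘ s).esymm_zero.trans s.esymm_zero.symm) (Multiset.esymm_cons_succ b s)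

/-- `∏ (1+|aⱼ|²) ≤ ∑ k!(p-k)! |s_k|²` where `s_k` is the `k`-th elementary
symmetric function of `a₁,…,a_p`. -/
theorem stmt_7 (p : ℕ) (a : Fin p → ℂ) :
    ∏ j, (1 + ‖a j‖ ^ 2)
      ≤ ∑ k ∈ Finset.range (p + 1),
          (k.factorial * (p - k).factorial : ℝ) *
            ‖∑ A ∈ Finset.univ.powersetCard k, ∏ j ∈ A, a j‖ ^ 2 := by
  have h := prod_one_add_normSq_le_fischerNormSq_esymm (univ.val.map a)
  simp only [Multiset.map_map, Function.comp_def, Finset.prod_map_val, Multiset.card_map,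
    card_val, card_fin, fischerNormSq, Finset.esymm_map_val] at h
  simpa only [Complex.sq_norm] using h
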